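/- Let A be a unital C*-algebra and a ∈ A a positive invertible element. Then for every real α > 0 and every hermitian continuous linear functional f on A, the inequalities r_{a^α}(f) ≤ ‖a^α‖ · ‖f‖ and ‖f‖ ≤ ‖a^{−α}‖ · r_{a^α}(f) hold; in particular r_{a^α} is equivalent to the dual norm ‖·‖ on hermitian functionals. -/

import Mathlib

open scoped ComplexOrder NNReal

variable {A : Type*} [CStarAlgebra A] [PartialOrder A] [StarOrderedRing A]

/-- A continuous linear functional on a C*-algebra is positive if it is nonnegative on
positive elements (using the complex order). -/
def IsPosFunctional {A : Type*} [CStarAlgebra A] [PartialOrder A] [StarOrderedRing A]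
    (f : A →L[ℂ] ℂ) : Prop :=
  ∀ x : A, 0 ≤ x → 0 ≤ f x

/-- A continuous linear functional is hermitian if `f (star x) = conj (f x)` for all `x`. -/
def IsHermitianFunctional {A : Type*} [CStarAlgebra A] (f : A →L[ℂ] ℂ) : Prop :=
  ∀ x : A, f (star x) = starRingEnd ℂ (f x)

/-- The seminorm `r_a` associated with a positive element `a`:
`r_a(f) = inf { f₁(a) + f₂(a) | f = f₁ - f₂, f₁, f₂ positive }`. -/
noncomputable def rSeminorm {A : Type*} [CStarAlgebra A] [PartialOrder A] [StarOrderedRing A]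
    (a : A) (f : A →L[ℂ] ℂ) : ℝ :=
  sInf { r : ℝ | ∃ f₁ f₂ : A →L[ℂ] ℂ, IsPosFunctional f₁ ∧ IsPosFunctional f₂ ∧
    f = f₁ - f₂ ∧ (r : ℂ) = f₁ a + f₂ a }

/-! Hahn–Banach, applied to a sublinear majorant built from `re ∘ f`, the norm and the cone of
positive elements, yields a Jordan decomposition `f = f₁ - f₂` into positive functionals with
`f₁ 1 + f₂ 1 ≤ ‖f‖`. For positive `b` this gives `r_b(f) ≤ f₁ b + f₂ b ≤ ‖b‖ ‖f‖`.
Conversely `‖g‖ ≤ g 1` for positive `g` (Cauchy–Schwarz), and `1 ≤ ‖a^(-α)‖ • a^α`, so every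
decomposition satisfies `‖f‖ ≤ ‖f₁‖ + ‖f₂‖ ≤ ‖a^(-α)‖ (f₁ + f₂)(a^α)`. -/

namespace IsPosFunctional

variable {f : A →L[ℂ] ℂ}

noncomputable def toPositiveLinearMap (hf : IsPosFunctional f) : A →ₚ[ℂ] ℂ :=
  .mk₀ f.toLinearMap hf

@[simp]
lemma toPositiveLinearMap_apply (hf : IsPosFunctional f) (x : A) :
    hf.toPositiveLinearMap x = f x :=
  rfl

lemma ofReal_re_apply (hf : IsPosFunctional f) {x : A} (hx : 0 ≤ x) : ((f x).re : ℂ) = f x :=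
  Complex.ext rfl (Complex.le_def.mp (hf x hx)).2

lemma apply_mono (hf : IsPosFunctional f) {x y : A} (h : x ≤ y) : f x ≤ f y :=
  hf.toPositiveLinearMap.monotone' h

lemma re_apply_le_norm_mul_re_apply_one (hf : IsPosFunctional f) {x : A}
    (hx : IsSelfAdjoint x) : (f x).re ≤ ‖x‖ * (f 1).re := by
  have := Complex.le_def.mp (hf.apply_mono hx.le_algebraMap_norm_self)
  simpa [Algebra.algebraMap_eq_smul_one] using this.1

-- Cauchy–Schwarz for the GNS semi-inner product `f (star x * y)`, applied to `1` and `y`.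
lemma norm_le_re_apply_one (hf : IsPosFunctional f) : ‖f‖ ≤ (f 1).re := by
  set g := hf.toPositiveLinearMap
  have hone : 0 ≤ (f 1).re := (Complex.le_def.mp (hf 1 zero_le_one)).1
  refine f.opNorm_le_bound hone fun y => ?_
  have cs := norm_inner_le_norm (𝕜 := ℂ) (g.toPreGNS 1) (g.toPreGNS y)
  have hy : (f (star y * y)).re ≤ ‖y‖ ^ 2 * (f 1).re := by
    simpa [CStarRing.norm_star_mul_self, sq] using
      hf.re_apply_le_norm_mul_re_apply_one (IsSelfAdjoint.star_mul_self y)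
  calc ‖f y‖ ≤ √(f 1).re * √(f (star y * y)).re := by
        simpa [g.preGNS_inner_def, g.preGNS_norm_def, g] using cs
    _ ≤ √(f 1).re * √(‖y‖ ^ 2 * (f 1).re) := by gcongr
    _ = (f 1).re * ‖y‖ := by
        rw [Real.sqrt_mul (sq_nonneg _), Real.sqrt_sq (norm_nonneg _), mul_left_comm,
          Real.mul_self_sqrt hone, mul_comm]

end IsPosFunctional

lemma norm_le_of_neg_algebraMap_le_of_le_algebraMap {x : A} {r : ℝ} (hr : 0 ≤ r)
    (hlow : -algebraMap ℝ A r ≤ x) (hup : x ≤ algebraMap ℝ A r) : ‖x‖ ≤ r := by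
  have hx : IsSelfAdjoint x := by
    simpa using (IsSelfAdjoint.of_nonneg (sub_nonneg.mpr hlow)).sub (.algebraMap A (.all r))
  have hle := (le_algebraMap_iff_spectrum_le hx).mp hup
  have hge := (algebraMap_le_iff_le_spectrum (r := -r) hx).mp (by rwa [map_neg])
  rw [← cfc_id ℝ x hx]
  exact norm_cfc_le hr fun t ht => abs_le.mpr ⟨hge t ht, hle t ht⟩

lemma norm_le_norm_add_of_nonpos {u v : A} (hu : u ≤ 0) (hv : v ≤ 0) : ‖u‖ ≤ ‖u + v‖ := by
  have := CStarAlgebra.norm_le_norm_of_nonneg_of_le (neg_nonneg.mpr hu)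
    (neg_le_neg (add_le_of_nonpos_right hv))
  rwa [norm_neg, norm_neg] at this

lemma one_le_norm_rpow_neg_smul_rpow {a : A} (ha : 0 ≤ a) (ha' : IsUnit a) (α : ℝ) :
    (1 : A) ≤ ‖a ^ (-α)‖ • a ^ α := by
  set s : A := a ^ (α / 2)
  have hs : IsSelfAdjoint s := .of_nonneg CFC.rpow_nonneg
  have h1 : s * a ^ (-α) * s = 1 := by
    rw [← CFC.rpow_add ha', ← CFC.rpow_add ha', show α / 2 + -α + α / 2 = 0 by ring,
      CFC.rpow_zero a ha]
  have h2 : s * s = a ^ α := by rw [← CFC.rpow_add ha', add_halves]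
  have hc : IsSelfAdjoint (a ^ (-α)) := .of_nonneg CFC.rpow_nonneg
  have := star_left_conjugate_le_conjugate hc.le_algebraMap_norm_self s
  rwa [hs.star_eq, h1, Algebra.algebraMap_eq_smul_one, mul_smul_comm, mul_one, smul_mul_assoc,
    h2] at this

lemma exists_linearMap_le_sublinear_apply_eq {E : Type*} [AddCommGroup E] [Module ℝ E]
    (N : E → ℝ) (N_hom : ∀ c : ℝ, 0 < c → ∀ x, N (c • x) = c * N x)
    (N_add : ∀ x y, N (x + y) ≤ N x + N y) (x₀ : E) :
    ∃ g : E →ₗ[ℝ] ℝ, (∀ x, g x ≤ N x) ∧ g x₀ = N x₀ := by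
  have N_zero : N 0 = 0 := by
    have := N_hom 2 two_pos 0
    rw [smul_zero] at this
    linarith
  have N_neg : -N x₀ ≤ N (-x₀) := by
    have := N_add x₀ (-x₀)
    rw [add_neg_cancel, N_zero] at this
    linarith
  set φ := LinearPMap.mkSpanSingleton' (σ := RingHom.id ℝ) x₀ (N x₀) fun t ht => by
    rcases smul_eq_zero.mp ht with rfl | rfl
    · exact zero_smul ℝ _
    · rw [N_zero, smul_zero]
  have hφ : ∀ x : φ.domain, φ x ≤ N x := by
    rintro ⟨x, hx⟩
    obtain ⟨t, rfl⟩ := Submodule.mem_span_singleton.mp hx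
    simp only [φ, LinearPMap.mkSpanSingleton'_apply, smul_eq_mul, RingHom.id_apply]
    rcases lt_trichotomy t 0 with ht | rfl | ht
    · rw [← neg_smul_neg, N_hom (-t) (neg_pos.mpr ht)]
      nlinarith
    · simp [N_zero]
    · rw [N_hom t ht]
  obtain ⟨g, hgφ, hgN⟩ := exists_extension_of_le_sublinear φ N N_hom N_add hφ
  refine ⟨g, hgN, ?_⟩
  have hx₀ : x₀ ∈ φ.domain := Submodule.mem_span_singleton_self x₀
  exact (hgφ ⟨x₀, hx₀⟩).trans (LinearPMap.mkSpanSingleton'_apply_self _ _ _ _)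

section JordanMajorant

variable (f : A →L[ℂ] ℂ)

/- A linear `g ≤ jordanMajorant f` is nonnegative and dominates `re ∘ f` on positive elements
(test with `u = -x` or `v = -x`); prescribing `g (-1)` then controls `g 1`. -/
def jordanMajorantSet (x : A) : Set ℝ :=
  {r | ∃ u v w : A, u ≤ 0 ∧ v ≤ 0 ∧ x = u + v + w ∧ r = (f u).re + ‖f‖ * ‖w‖}

noncomputable def jordanMajorant (x : A) : ℝ :=
  sInf (jordanMajorantSet f x)

variable {f}

lemma neg_norm_mul_norm_le_of_mem_jordanMajorantSet {x : A} {r : ℝ}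
    (hr : r ∈ jordanMajorantSet f x) : -(‖f‖ * ‖x‖) ≤ r := by
  obtain ⟨u, v, w, hu, hv, rfl, rfl⟩ := hr
  have hfu : -(‖f‖ * ‖u‖) ≤ (f u).re :=
    neg_le_of_abs_le ((Complex.abs_re_le_norm _).trans (f.le_opNorm u))
  have hu' : ‖u‖ ≤ ‖u + v + w‖ + ‖w‖ :=
    (norm_le_norm_add_of_nonpos hu hv).trans (norm_le_add_norm_add (u + v) w)
  nlinarith [norm_nonneg f]

lemma isGLB_jordanMajorant (x : A) : IsGLB (jordanMajorantSet f x) (jordanMajorant f x) :=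
  isGLB_csInf ⟨_, 0, 0, x, le_rfl, le_rfl, by simp, rfl⟩
    ⟨_, fun _ => neg_norm_mul_norm_le_of_mem_jordanMajorantSet⟩

lemma jordanMajorant_le {u v : A} (hu : u ≤ 0) (hv : v ≤ 0) (w : A) :
    jordanMajorant f (u + v + w) ≤ (f u).re + ‖f‖ * ‖w‖ :=
  (isGLB_jordanMajorant _).1 ⟨u, v, w, hu, hv, rfl, rfl⟩

lemma jordanMajorant_nonpos {x : A} (hx : x ≤ 0) : jordanMajorant f x ≤ 0 := by
  simpa using jordanMajorant_le (f := f) le_rfl hx 0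

lemma jordanMajorant_le_re {x : A} (hx : x ≤ 0) : jordanMajorant f x ≤ (f x).re := by
  simpa using jordanMajorant_le (f := f) hx le_rfl 0

lemma jordanMajorant_add (x y : A) :
    jordanMajorant f (x + y) ≤ jordanMajorant f x + jordanMajorant f y := by
  have key : ∀ r ∈ jordanMajorantSet f x, ∀ s ∈ jordanMajorantSet f y,
      jordanMajorant f (x + y) ≤ r + s := by
    rintro _ ⟨u, v, w, hu, hv, rfl, rfl⟩ _ ⟨u', v', w', hu', hv', rfl, rfl⟩
    have h := jordanMajorant_le (f := f) (add_nonpos hu hu') (add_nonpos hv hv') (w + w')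
    rw [show u + u' + (v + v') + (w + w') = u + v + w + (u' + v' + w') by abel, map_add,
      Complex.add_re] at h
    nlinarith [norm_add_le w w', norm_nonneg f]
  have h : jordanMajorant f (x + y) - jordanMajorant f y ≤ jordanMajorant f x :=
    (isGLB_jordanMajorant x).2 fun r hr =>
      sub_le_comm.mp <| (isGLB_jordanMajorant y).2 fun s hs =>
        sub_le_iff_le_add'.mpr (key r hr s hs)
  linarith

lemma jordanMajorant_smul_le {c : ℝ} (hc : 0 < c) (x : A) :
    jordanMajorant f (c • x) ≤ c * jordanMajorant f x := by
  rw [← div_le_iff₀' hc]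
  refine (isGLB_jordanMajorant x).2 ?_
  rintro _ ⟨u, v, w, hu, hv, rfl, rfl⟩
  rw [div_le_iff₀' hc]
  have h := jordanMajorant_le (f := f) (smul_nonpos_of_nonneg_of_nonpos hc.le hu)
    (smul_nonpos_of_nonneg_of_nonpos hc.le hv) (c • w)
  rw [← smul_add, ← smul_add, ContinuousLinearMap.map_smul_of_tower, Complex.real_smul,
    Complex.re_ofReal_mul, norm_smul, Real.norm_of_nonneg hc.le] at h
  linarith

lemma jordanMajorant_smul {c : ℝ} (hc : 0 < c) (x : A) :
    jordanMajorant f (c • x) = c * jordanMajorant f x := by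
  refine le_antisymm (jordanMajorant_smul_le hc x) ?_
  have h := jordanMajorant_smul_le (f := f) (inv_pos.mpr hc) (c • x)
  rw [inv_smul_smul₀ hc.ne'] at h
  rwa [← le_inv_mul_iff₀ hc]

lemma neg_half_norm_add_re_le_jordanMajorant_neg_one :
    -((‖f‖ + (f 1).re) / 2) ≤ jordanMajorant f (-1) := by
  refine (isGLB_jordanMajorant _).2 ?_
  rintro _ ⟨u, v, w, hu, hv, hsum, rfl⟩
  have hw : w ≤ algebraMap ℝ A ‖w‖ := by
    have hsa : IsSelfAdjoint (-u + -v + -1) :=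
      ((IsSelfAdjoint.of_nonneg (neg_nonneg.mpr hu)).add
        (IsSelfAdjoint.of_nonneg (neg_nonneg.mpr hv))).add (IsSelfAdjoint.one A).neg
    rw [show w = -u + -v + -1 by rw [hsum]; abel]
    exact hsa.le_algebraMap_norm_self
  set s := 1 + 2 * ‖w‖
  have hz_up : u + u + 1 ≤ algebraMap ℝ A s :=
    calc u + u + 1 ≤ 1 := add_le_of_nonpos_left (add_nonpos hu hu)
      _ = algebraMap ℝ A 1 := (map_one _).symm
      _ ≤ algebraMap ℝ A s := algebraMap_mono A (by simp [s])
  have hz_low : -algebraMap ℝ A s ≤ u + u + 1 := by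
    have hs : algebraMap ℝ A s = 1 + (algebraMap ℝ A ‖w‖ + algebraMap ℝ A ‖w‖) := by
      rw [map_add, map_one, map_mul, map_ofNat, two_mul]
    have hu_eq : u = -1 - v - w := by rw [hsum]; abel
    rw [neg_le_iff_add_nonneg', hs, hu_eq]
    have h := add_nonneg (neg_nonneg.mpr hv) (sub_nonneg.mpr hw)
    convert add_nonneg h h using 1
    abel
  have hz := norm_le_of_neg_algebraMap_le_of_le_algebraMap (by positivity) hz_low hz_up
  have hfz : -(‖f‖ * s) ≤ (f (u + u + 1)).re :=
    neg_le_of_abs_le ((Complex.abs_re_le_norm _).trans ((f.le_opNorm _).trans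
      (mul_le_mul_of_nonneg_left hz (norm_nonneg f))))
  simp only [map_add, Complex.add_re, s] at hfz
  linarith

end JordanMajorant

open scoped ComplexStarModule in
lemma exists_isPosFunctional_eq_of_isSelfAdjoint (g : A →ₗ[ℝ] ℝ) (hg : ∀ x, 0 ≤ x → 0 ≤ g x) :
    ∃ F : A →L[ℂ] ℂ, IsPosFunctional F ∧ ∀ x, IsSelfAdjoint x → F x = g x := by
  set G : A →ₗ[ℝ] ℝ :=
    { toFun x := g (ℜ x : A)
      map_add' x y := by simp
      map_smul' c x := by simp }
  set F₀ : A →ₗ[ℂ] ℂ := Module.Dual.extendRCLike G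
  have hF₀ : ∀ x, IsSelfAdjoint x → F₀ x = g x := fun x hx => by
    simp [F₀, G, Module.Dual.extendRCLike_apply, realPart_I_smul, hx.imaginaryPart,
      hx.coe_realPart]
  have hF₀_pos : ∀ x, 0 ≤ x → 0 ≤ F₀ x := fun x hx => by
    rw [hF₀ x (.of_nonneg hx)]
    exact Complex.zero_le_real.mpr (hg x hx)
  -- positive functionals on a C⋆-algebra are automatically continuous
  set F := PositiveLinearMap.mk₀ F₀ hF₀_pos
  exact ⟨⟨F₀, map_continuous F⟩, hF₀_pos, hF₀⟩

namespace IsHermitianFunctional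

variable {f : A →L[ℂ] ℂ}

theorem exists_jordanDecomposition (hf : IsHermitianFunctional f) :
    ∃ f₁ f₂ : A →L[ℂ] ℂ, IsPosFunctional f₁ ∧ IsPosFunctional f₂ ∧ f = f₁ - f₂ ∧
      (f₁ 1).re + (f₂ 1).re ≤ ‖f‖ := by
  obtain ⟨g, hg_le, hg_neg_one⟩ := exists_linearMap_le_sublinear_apply_eq (jordanMajorant f)
    (fun _ hc x => jordanMajorant_smul hc x) jordanMajorant_add (-1)
  have hg_nonneg : ∀ x, 0 ≤ x → 0 ≤ g x := fun x hx => by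
    simpa using (hg_le (-x)).trans (jordanMajorant_nonpos (neg_nonpos.mpr hx))
  have hg_re : ∀ x, 0 ≤ x → (f x).re ≤ g x := fun x hx => by
    simpa using (hg_le (-x)).trans (jordanMajorant_le_re (neg_nonpos.mpr hx))
  obtain ⟨f₁, hf₁, hf₁g⟩ := exists_isPosFunctional_eq_of_isSelfAdjoint g hg_nonneg
  refine ⟨f₁, f₁ - f, hf₁, fun x hx => ?_, (sub_sub_cancel _ _).symm, ?_⟩
  · have hfx : f x = (f x).re :=
      (Complex.conj_eq_iff_re.mp (by rw [← hf x, (IsSelfAdjoint.of_nonneg hx).star_eq])).symm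
    rw [sub_apply, hf₁g x (.of_nonneg hx), hfx, ← Complex.ofReal_sub]
    exact Complex.zero_le_real.mpr (sub_nonneg.mpr (hg_re x hx))
  · have hg_one : g 1 ≤ (‖f‖ + (f 1).re) / 2 := by
      have := neg_half_norm_add_re_le_jordanMajorant_neg_one (f := f)
      rw [← hg_neg_one, map_neg] at this
      linarith
    simp only [sub_apply, Complex.sub_re, hf₁g 1 (.one A), Complex.ofReal_re]
    linarith

end IsHermitianFunctional

section rSeminorm

variable {b : A} {f : A →L[ℂ] ℂ}

lemma rSeminorm_le_re_add_re (hb : 0 ≤ b) {f₁ f₂ : A →L[ℂ] ℂ} (h₁ : IsPosFunctional f₁)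
    (h₂ : IsPosFunctional f₂) (hf : f = f₁ - f₂) : rSeminorm b f ≤ (f₁ b).re + (f₂ b).re := by
  refine csInf_le ⟨0, ?_⟩ ⟨f₁, f₂, h₁, h₂, hf, ?_⟩
  · rintro r ⟨g₁, g₂, hg₁, hg₂, -, hr⟩
    have h := add_nonneg (hg₁ b hb) (hg₂ b hb)
    rw [← hr] at h
    exact_mod_cast h
  · rw [Complex.ofReal_add, h₁.ofReal_re_apply hb, h₂.ofReal_re_apply hb]

lemma le_mul_rSeminorm (hb : 0 ≤ b) {c t : ℝ} (ht : 0 ≤ t)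
    (hne : ∃ f₁ f₂ : A →L[ℂ] ℂ, IsPosFunctional f₁ ∧ IsPosFunctional f₂ ∧ f = f₁ - f₂)
    (h : ∀ f₁ f₂ : A →L[ℂ] ℂ, IsPosFunctional f₁ → IsPosFunctional f₂ → f = f₁ - f₂ →
      c ≤ t * ((f₁ b).re + (f₂ b).re)) :
    c ≤ t * rSeminorm b f := by
  rw [rSeminorm, ← smul_eq_mul, ← Real.sInf_smul_of_nonneg ht]
  refine le_csInf ?_ ?_
  · obtain ⟨f₁, f₂, h₁, h₂, hf⟩ := hne
    refine ⟨_, (f₁ b).re + (f₂ b).re, ⟨f₁, f₂, h₁, h₂, hf, ?_⟩, rfl⟩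
    rw [Complex.ofReal_add, h₁.ofReal_re_apply hb, h₂.ofReal_re_apply hb]
  · rintro _ ⟨r, ⟨f₁, f₂, h₁, h₂, hf, hr⟩, rfl⟩
    have hr' : r = (f₁ b).re + (f₂ b).re := by simpa using congrArg Complex.re hr
    rw [hr']
    exact h f₁ f₂ h₁ h₂ hf

theorem rSeminorm_le_norm_mul_norm (hb : 0 ≤ b) (hf : IsHermitianFunctional f) :
    rSeminorm b f ≤ ‖b‖ * ‖f‖ := by
  obtain ⟨f₁, f₂, h₁, h₂, rfl, hnorm⟩ := hf.exists_jordanDecomposition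
  calc rSeminorm b (f₁ - f₂) ≤ (f₁ b).re + (f₂ b).re := rSeminorm_le_re_add_re hb h₁ h₂ rfl
    _ ≤ ‖b‖ * (f₁ 1).re + ‖b‖ * (f₂ 1).re :=
      add_le_add (h₁.re_apply_le_norm_mul_re_apply_one (.of_nonneg hb))
        (h₂.re_apply_le_norm_mul_re_apply_one (.of_nonneg hb))
    _ ≤ ‖b‖ * ‖f₁ - f₂‖ := by
      rw [← mul_add]
      exact mul_le_mul_of_nonneg_left hnorm (norm_nonneg b)

theorem norm_le_mul_rSeminorm (hb : 0 ≤ b) {t : ℝ} (ht : 0 ≤ t) (hbt : 1 ≤ t • b)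
    (hf : IsHermitianFunctional f) : ‖f‖ ≤ t * rSeminorm b f := by
  have key : ∀ g : A →L[ℂ] ℂ, IsPosFunctional g → ‖g‖ ≤ t * (g b).re := fun g hg => by
    have := (Complex.le_def.mp (hg.apply_mono hbt)).1
    rw [ContinuousLinearMap.map_smul_of_tower, Complex.real_smul, Complex.re_ofReal_mul] at this
    exact hg.norm_le_re_apply_one.trans this
  obtain ⟨f₁, f₂, h₁, h₂, hfd, -⟩ := hf.exists_jordanDecomposition
  refine le_mul_rSeminorm hb ht ⟨f₁, f₂, h₁, h₂, hfd⟩ fun f₁ f₂ h₁ h₂ hfd => ?_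
  calc ‖f‖ ≤ ‖f₁‖ + ‖f₂‖ := hfd ▸ norm_sub_le f₁ f₂
    _ ≤ t * (f₁ b).re + t * (f₂ b).re := add_le_add (key f₁ h₁) (key f₂ h₂)
    _ = t * ((f₁ b).re + (f₂ b).re) := (mul_add _ _ _).symm

end rSeminorm

theorem rSeminorm_rpow_equiv_norm_of_isUnit_general (a : A) (ha : 0 ≤ a) (ha' : IsUnit a)
    (α : ℝ) (f : A →L[ℂ] ℂ) (hf : IsHermitianFunctional f) :
    rSeminorm (a ^ α) f ≤ ‖a ^ α‖ * ‖f‖ ∧ ‖f‖ ≤ ‖a ^ (-α)‖ * rSeminorm (a ^ α) f :=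
  ⟨rSeminorm_le_norm_mul_norm CFC.rpow_nonneg hf,
    norm_le_mul_rSeminorm CFC.rpow_nonneg (norm_nonneg _)
      (one_le_norm_rpow_neg_smul_rpow ha ha' α) hf⟩

/-- If `a` is positive and invertible, then for every `α > 0` and hermitian `f`,
`r_{a^α}(f) ≤ ‖a^α‖ * ‖f‖` and `‖f‖ ≤ ‖a^{-α}‖ * r_{a^α}(f)`. -/
theorem rSeminorm_rpow_equiv_norm_of_isUnit (a : A) (ha : 0 ≤ a) (ha' : IsUnit a)
    (α : ℝ) (hα : 0 < α) (f : A →L[ℂ] ℂ) (hf : IsHermitianFunctional f) :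
    rSeminorm (a ^ α) f ≤ ‖a ^ α‖ * ‖f‖ ∧ ‖f‖ ≤ ‖a ^ (-α)‖ * rSeminorm (a ^ α) f :=
  rSeminorm_rpow_equiv_norm_of_isUnit_general a ha ha' α f hf
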